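/- The rational plane curve C₂ parametrized by y = s, x = -q(s)/p(s) with p(s) = s³ - 3s² + 1 and q(s) = s³ - s² + s is tangent to the line x + y = 2a at the point (a, a) for each a ∈ {0, 1, -1}; that is, for each such a the function s ↦ -q(s)/p(s) + s - 2a vanishes to order at least 2 at s = a. -/
import Mathlib


open Polynomial

/-- The rational curve C₂ parametrized by y = s, x = -q(s)/p(s), with
p = s³-3s²+1 and q = s³-s²+s, is tangent to the line x + y = 2a at (a,a) for
each a ∈ {0, 1, -1}: p(a) ≠ 0 and the function s ↦ -q(s)/p(s) + s - 2a
vanishes to order at least 2 at s = a, i.e. (s-a)² divides its numerator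
(s-2a)·p(s) - q(s). -/
theorem stmt_11 :
    ∀ a : ℂ, a ∈ ({0, 1, -1} : Set ℂ) →
      eval a (X^3 - 3*X^2 + 1 : ℂ[X]) ≠ 0 ∧
      (X - C a)^2 ∣
        ((X - C (2*a)) * (X^3 - 3*X^2 + 1) - (X^3 - X^2 + X) : ℂ[X]) := by
  rintro a (rfl | rfl | rfl)
  · refine ⟨by simp, ⟨X^2 - 4*X + 1, by simp only [mul_zero, map_zero]; ring⟩⟩
  · refine ⟨by norm_num, ⟨X^2 - 4*X - 2, by simp only [mul_one, map_ofNat, map_one]; ring⟩⟩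
  · refine ⟨by norm_num, ⟨X^2 - 4*X + 2, by simp only [mul_neg, mul_one, map_neg, map_ofNat, map_one]; ring⟩⟩
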